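/- arXiv:1301.4008 — 3 statements merged into one kernel-verified Lean document; each statement's English description precedes it below -/
import Mathlib

section
/- Let k ≥ 2 and let n be a positive multiple of 6. If F_1, F_2, ..., F_k are graphs on a common vertex set of size n, each of which is isomorphic to the cycle C_n, then the simultaneous domination number of F_1, ..., F_k is at most (1 − (1/2)(2/3)^{k−2}) · n. -/
/-- The simultaneous domination number of factors `F 0, …, F (k-1)` on a common
finite vertex set: the minimum cardinality of a set `S` that is a dominating set
in every factor. -/
noncomputable def simDomNum {V : Type*} [Fintype V] {k : ℕ}
    (F : Fin k → SimpleGraph V) : ℕ :=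
  sInf {m | ∃ S : Finset V, (∀ i, ∀ v ∉ S, ∃ u ∈ S, (F i).Adj v u) ∧ S.card = m}

namespace SDAux

open SimpleGraph Finset

/-! ### The flip map pairing `2i ↔ 2i+1` on `Fin n`. -/

def cflip (n : ℕ) [NeZero n] (p : Fin n) : Fin n :=
  if p.val % 2 = 0 then p + 1 else p - 1

variable {n : ℕ} [NeZero n]

lemma fin_add_one_val (hn2 : 2 ≤ n) (p : Fin n) : (p + 1).val = (p.val + 1) % n := by
  rw [Fin.add_def, Fin.val_one' n, Nat.mod_eq_of_lt hn2]

lemma fin_sub_one_val (hn2 : 2 ≤ n) (p : Fin n) : (p - 1).val = (n - 1 + p.val) % n := by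
  rw [Fin.sub_def, Fin.val_one' n, Nat.mod_eq_of_lt hn2]

lemma cflip_val (h2 : 2 ∣ n) (hn2 : 2 ≤ n) (p : Fin n) :
    (cflip n p).val = if p.val % 2 = 0 then p.val + 1 else p.val - 1 := by
  have hlt := p.isLt
  unfold cflip
  split_ifs with h
  · rw [fin_add_one_val hn2]
    exact Nat.mod_eq_of_lt (by omega)
  · rw [fin_sub_one_val hn2]
    have h1 : n - 1 + p.val = (p.val - 1) + n := by omega
    rw [h1, Nat.add_mod_right]
    exact Nat.mod_eq_of_lt (by omega)

lemma cflip_invol (h2 : 2 ∣ n) (hn2 : 2 ≤ n) (p : Fin n) :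
    cflip n (cflip n p) = p := by
  have hlt := p.isLt
  have hv := cflip_val h2 hn2 p
  by_cases h : p.val % 2 = 0
  · have h1 : cflip n p = p + 1 := if_pos h
    have h2' : (cflip n p).val % 2 ≠ 0 := by rw [hv, if_pos h]; omega
    rw [h1] at h2' ⊢
    unfold cflip
    rw [if_neg h2', add_sub_cancel_right]
  · have h1 : cflip n p = p - 1 := if_neg h
    have h2' : (cflip n p).val % 2 = 0 := by rw [hv, if_neg h]; omega
    rw [h1] at h2' ⊢
    unfold cflip
    rw [if_pos h2', sub_add_cancel]

lemma cflip_ne (h2 : 2 ∣ n) (hn2 : 2 ≤ n) (p : Fin n) : cflip n p ≠ p := by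
  intro hne
  have := congrArg Fin.val hne
  rw [cflip_val h2 hn2] at this
  have hlt := p.isLt
  split_ifs at this <;> omega

lemma cflip_adj (h2 : 2 ∣ n) (hn2 : 2 ≤ n) (p : Fin n) :
    (cycleGraph n).Adj p (cflip n p) := by
  have h1 : ((1 : Fin n)).val = 1 := by rw [Fin.val_one' n]; exact Nat.mod_eq_of_lt hn2
  rw [cycleGraph_adj']
  unfold cflip
  split_ifs with h
  · right
    rw [add_sub_cancel_left, h1]
  · left
    rw [sub_sub_cancel, h1]

/-! ### Two-coloring compatible with two fixed-point-free involutions. -/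

lemma exists_flip_coloring {V : Type*} [Finite V] (μ ν : Equiv.Perm V)
    (hμ2 : ∀ v, μ (μ v) = v) (hν2 : ∀ v, ν (ν v) = v)
    (hμf : ∀ v, μ v ≠ v) (hνf : ∀ v, ν v ≠ v) :
    ∃ f : V → Bool, (∀ v, f (μ v) ≠ f v) ∧ (∀ v, f (ν v) ≠ f v) := by
  classical
  set g : Equiv.Perm V := ν * μ with hg
  have hμμ : μ * μ = 1 := Equiv.ext fun v => hμ2 v
  have hνν : ν * ν = 1 := Equiv.ext fun v => hν2 v
  have hμi : μ⁻¹ = μ := by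
    rw [eq_comm, eq_inv_iff_mul_eq_one]; exact hμμ
  have hνi : ν⁻¹ = ν := by
    rw [eq_comm, eq_inv_iff_mul_eq_one]; exact hνν
  have hsemi : SemiconjBy μ g g⁻¹ := by
    show μ * g = g⁻¹ * μ
    rw [hg, mul_inv_rev, hμi, hνi, ← mul_assoc]
  have hμg : ∀ (t : ℤ) (x : V), μ ((g ^ t) x) = (g ^ (-t)) (μ x) := by
    intro t x
    have h := (hsemi.zpow_right t).eq
    have := congrFun (congrArg (fun (e : Equiv.Perm V) => (e : V → V)) h) x
    simpa [Equiv.Perm.mul_apply, zpow_neg, inv_zpow] using this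
  have hgmul : ∀ (a b : ℤ) (x : V), (g ^ a) ((g ^ b) x) = (g ^ (a + b)) x := by
    intro a b x
    rw [← Equiv.Perm.mul_apply, ← zpow_add]
  have hν_eq : ∀ x, ν x = g (μ x) := by
    intro x
    rw [hg, Equiv.Perm.mul_apply, hμ2]
  -- the setoid of orbits of g
  let s : Setoid V :=
    ⟨fun v w => ∃ t : ℤ, (g ^ t) v = w,
     ⟨fun v => ⟨0, rfl⟩,
      fun {v w} h => by
        obtain ⟨t, ht⟩ := h
        exact ⟨-t, by rw [← ht, hgmul]; simp⟩,
      fun {v w x} h1 h2 => by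
        obtain ⟨t, ht⟩ := h1
        obtain ⟨u, hu⟩ := h2
        exact ⟨u + t, by rw [← hu, ← ht, hgmul]⟩⟩⟩
  have hresp : ∀ v w : V, s.r v w → s.r (μ v) (μ w) := by
    intro v w h
    obtain ⟨t, ht⟩ := h
    exact ⟨-t, by rw [← ht, ← hμg]⟩
  let Q := Quotient s
  let μbar : Q → Q := Quotient.map μ hresp
  have hμbar_mk : ∀ v : V, μbar (Quotient.mk s v) = Quotient.mk s (μ v) :=
    fun v => rfl
  have hμbar2 : ∀ q : Q, μbar (μbar q) = q := by
    intro q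
    induction q using Quotient.ind with
    | _ v => rw [hμbar_mk, hμbar_mk, hμ2]
  have hμbarf : ∀ q : Q, μbar q ≠ q := by
    intro q
    induction q using Quotient.ind with
    | _ v =>
      intro h
      rw [hμbar_mk] at h
      have hrel : s.r (μ v) v := Quotient.exact h
      obtain ⟨t0, ht0⟩ := hrel
      -- obtain t with g^t v = μ v
      have ht : (g ^ (-t0)) v = μ v := by
        conv_lhs => rw [← ht0]
        rw [hgmul]
        simp
      set t : ℤ := -t0 with htdef
      rcases Int.even_or_odd t with ⟨j, hj⟩ | ⟨j, hj⟩
      · -- μ fixes g^j v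
        have : μ ((g ^ j) v) = (g ^ j) v := by
          rw [hμg j, ← ht, hgmul]
          have hjj : -j + t = j := by omega
          rw [hjj]
        exact hμf _ this
      · -- ν fixes g^(j+1) v
        have hg1 : ∀ x : V, g x = (g ^ (1 : ℤ)) x := by
          intro x; rw [zpow_one]
        have : ν ((g ^ (j + 1)) v) = (g ^ (j + 1)) v := by
          rw [hν_eq, hμg (j + 1), ← ht, hgmul, hg1, hgmul]
          have hjj : 1 + (-(j + 1) + t) = j + 1 := by omega
          rw [hjj]
        exact hνf _ this
  -- linear order the quotient
  haveI : Finite Q := Quotient.finite s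
  obtain ⟨N, ⟨eqv⟩⟩ := Finite.exists_equiv_fin Q
  let fbar : Q → Bool := fun q => decide (eqv q < eqv (μbar q))
  have hfbar : ∀ q : Q, fbar (μbar q) ≠ fbar q := by
    intro q
    have hne : eqv (μbar q) ≠ eqv q := fun h => hμbarf q (eqv.injective h)
    show decide (eqv (μbar q) < eqv (μbar (μbar q))) ≠ decide (eqv q < eqv (μbar q))
    rw [hμbar2]
    rcases lt_or_gt_of_ne hne with h | h
    · simp [h, asymm h]
    · simp [h, asymm h]
  refine ⟨fun v => fbar (Quotient.mk s v), fun v => ?_, fun v => ?_⟩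
  · have := hfbar (Quotient.mk s v)
    rwa [hμbar_mk] at this
  · have hq : Quotient.mk s (ν v) = Quotient.mk s (μ v) := by
      apply Quotient.sound
      exact Setoid.symm ⟨1, by rw [zpow_one, ← hν_eq]⟩
    show fbar (Quotient.mk s (ν v)) ≠ fbar (Quotient.mk s v)
    rw [hq]
    have := hfbar (Quotient.mk s v)
    rwa [hμbar_mk] at this

/-! ### The shrinking step along one more cycle factor. -/

lemma shrink {V : Type*} {G : SimpleGraph V} (h3 : 3 ∣ n) (hn2 : 2 ≤ n)
    (E : V ≃ Fin n) (hE : ∀ a b : V, G.Adj a b ↔ (cycleGraph n).Adj (E a) (E b))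
    (T : Finset V) :
    ∃ T' : Finset V, T' ⊆ T ∧ 2 * T.card ≤ 3 * T'.card ∧
      ∀ v ∈ T', ∃ u, u ∉ T' ∧ G.Adj v u := by
  classical
  have h1 : ((1 : Fin n)).val = 1 := by rw [Fin.val_one' n]; exact Nat.mod_eq_of_lt hn2
  -- residue computations
  have hsucc : ∀ p : Fin n, (p + 1).val % 3 = (p.val + 1) % 3 := by
    intro p
    rw [fin_add_one_val hn2, Nat.mod_mod_of_dvd _ h3]
  have hpred : ∀ p : Fin n, (p - 1).val % 3 = (p.val + 2) % 3 := by
    intro p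
    rw [fin_sub_one_val hn2, Nat.mod_mod_of_dvd _ h3]
    omega
  set c : ℕ → Finset V := fun r => T.filter (fun v => (E v).val % 3 = r) with hc
  have hsum : (c 0).card + (c 1).card + (c 2).card = T.card := by
    have e0 : (c 0).card + (T.filter (fun v => ¬ ((E v).val % 3 = 0))).card = T.card :=
      Finset.card_filter_add_card_filter_not _
    have e1 : ((T.filter (fun v => ¬ ((E v).val % 3 = 0))).filter
          (fun v => (E v).val % 3 = 1)).card +
        ((T.filter (fun v => ¬ ((E v).val % 3 = 0))).filter
          (fun v => ¬ ((E v).val % 3 = 1))).card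
        = (T.filter (fun v => ¬ ((E v).val % 3 = 0))).card :=
      Finset.card_filter_add_card_filter_not _
    have h2eq : (T.filter (fun v => ¬ ((E v).val % 3 = 0))).filter
          (fun v => (E v).val % 3 = 1) = c 1 := by
      rw [Finset.filter_filter, hc]
      apply Finset.filter_congr
      intro v _
      constructor
      · rintro ⟨_, h⟩; exact h
      · intro h; exact ⟨by omega, h⟩
    have h3eq : (T.filter (fun v => ¬ ((E v).val % 3 = 0))).filter
          (fun v => ¬ ((E v).val % 3 = 1)) = c 2 := by
      rw [Finset.filter_filter, hc]
      apply Finset.filter_congr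
      intro v _
      constructor
      · rintro ⟨ha, hb⟩; omega
      · intro h; omega
    rw [h2eq, h3eq] at e1
    omega
  obtain ⟨r, hr3, hrc⟩ : ∃ r, r < 3 ∧ 3 * (c r).card ≤ T.card := by
    rcases (show 3 * (c 0).card ≤ T.card ∨ 3 * (c 1).card ≤ T.card ∨
        3 * (c 2).card ≤ T.card by omega) with h | h | h
    exacts [⟨0, by omega, h⟩, ⟨1, by omega, h⟩, ⟨2, by omega, h⟩]
  have hceq : c r = T.filter (fun v => (E v).val % 3 = r) := rfl
  rw [hceq] at hrc
  refine ⟨T.filter (fun v => ¬ ((E v).val % 3 = r)), Finset.filter_subset _ _, ?_, ?_⟩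
  · have := Finset.card_filter_add_card_filter_not
      (s := T) (p := fun v => (E v).val % 3 = r)
    omega
  · intro v hv
    rw [Finset.mem_filter] at hv
    obtain ⟨hvT, hres⟩ := hv
    set p : Fin n := E v with hp
    by_cases hcase : (p.val + 1) % 3 = r
    · refine ⟨E.symm (p + 1), ?_, ?_⟩
      · intro hmem
        rw [Finset.mem_filter] at hmem
        apply hmem.2
        rw [E.apply_symm_apply, hsucc, hcase]
      · have : G.Adj (E.symm p) (E.symm (p + 1)) := by
          rw [hE, E.apply_symm_apply, E.apply_symm_apply, cycleGraph_adj']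
          right
          rw [add_sub_cancel_left, h1]
        rwa [hp, E.symm_apply_apply] at this
    · refine ⟨E.symm (p - 1), ?_, ?_⟩
      · intro hmem
        rw [Finset.mem_filter] at hmem
        apply hmem.2
        rw [E.apply_symm_apply, hpred]
        omega
      · have : G.Adj (E.symm p) (E.symm (p - 1)) := by
          rw [hE, E.apply_symm_apply, E.apply_symm_apply, cycleGraph_adj']
          left
          rw [sub_sub_cancel, h1]
        rwa [hp, E.symm_apply_apply] at this

end SDAux

theorem stmt16 {V : Type*} [Fintype V] {k n : ℕ} (hk : 2 ≤ k) (hn0 : 0 < n)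
    (hdvd : 6 ∣ n) (hn : Fintype.card V = n)
    (F : Fin k → SimpleGraph V)
    (hF : ∀ i, Nonempty (F i ≃g SimpleGraph.cycleGraph n)) :
    (simDomNum F : ℝ) ≤ (1 - (1 / 2) * ((2 : ℝ) / 3) ^ (k - 2)) * n := by
  classical
  have hn6 : 6 ≤ n := Nat.le_of_dvd hn0 hdvd
  have hn2 : 2 ≤ n := by omega
  have h2 : 2 ∣ n := Dvd.dvd.trans ⟨3, rfl⟩ hdvd
  have h3 : 3 ∣ n := Dvd.dvd.trans ⟨2, rfl⟩ hdvd
  haveI : NeZero n := ⟨hn0.ne'⟩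
  set E : ∀ i : Fin k, V ≃ Fin n := fun i => (hF i).some.toEquiv with hEdef
  have hE : ∀ (i : Fin k) (a b : V),
      (F i).Adj a b ↔ (SimpleGraph.cycleGraph n).Adj (E i a) (E i b) :=
    fun i a b => ((hF i).some.map_adj_iff).symm
  -- the matching permutations
  have hμinv : ∀ i : Fin k,
      Function.Involutive (fun v => (E i).symm (SDAux.cflip n (E i v))) := by
    intro i v
    simp only [Equiv.apply_symm_apply]
    rw [SDAux.cflip_invol h2 hn2, Equiv.symm_apply_apply]
  set μ : Fin k → Equiv.Perm V := fun i => (hμinv i).toPerm with hμdef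
  have hμapp : ∀ (i : Fin k) (v : V), μ i v = (E i).symm (SDAux.cflip n (E i v)) :=
    fun i v => rfl
  have hμ2 : ∀ (i : Fin k) (v : V), μ i (μ i v) = v := fun i => hμinv i
  have hμf : ∀ (i : Fin k) (v : V), μ i v ≠ v := by
    intro i v h
    rw [hμapp] at h
    have := congrArg (E i) h
    rw [Equiv.apply_symm_apply] at this
    exact SDAux.cflip_ne h2 hn2 (E i v) this
  have hμadj : ∀ (i : Fin k) (v : V), (F i).Adj v (μ i v) := by
    intro i v
    rw [hμapp, hE i, Equiv.apply_symm_apply]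
    exact SDAux.cflip_adj h2 hn2 (E i v)
  -- base two-coloring
  set i0 : Fin k := ⟨0, by omega⟩ with hi0
  set i1 : Fin k := ⟨1, by omega⟩ with hi1
  obtain ⟨f, hf0, hf1⟩ := SDAux.exists_flip_coloring (μ i0) (μ i1)
    (hμ2 i0) (hμ2 i1) (hμf i0) (hμf i1)
  set T₂ : Finset V := Finset.univ.filter (fun v => f v = true) with hT₂
  have hT₂card : 2 * T₂.card = n := by
    have hsum : T₂.card + (Finset.univ.filter (fun v => ¬ (f v = true))).card
        = Fintype.card V := by
      rw [hT₂]
      rw [Finset.card_filter_add_card_filter_not]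
      exact Finset.card_univ
    have hbij : (Finset.univ.filter (fun v => ¬ (f v = true))).card = T₂.card := by
      apply Finset.card_bij' (fun v _ => μ i0 v) (fun v _ => μ i0 v)
      · intro v hv
        simp only [Finset.mem_filter, Finset.mem_univ, true_and, Bool.not_eq_true] at hv
        simp only [hT₂, Finset.mem_filter, Finset.mem_univ, true_and]
        have h := hf0 v
        rw [hv] at h
        simpa using h
      · intro v hv
        simp only [hT₂, Finset.mem_filter, Finset.mem_univ, true_and] at hv
        simp only [Finset.mem_filter, Finset.mem_univ, true_and, Bool.not_eq_true]
        have h := hf0 v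
        rw [hv] at h
        simpa using h
      · intro v _; exact hμ2 i0 v
      · intro v _; exact hμ2 i0 v
    rw [hbij] at hsum
    omega
  have hT₂good : ∀ i : Fin k, (i : ℕ) < 2 → ∀ v ∈ T₂, ∃ u, u ∉ T₂ ∧ (F i).Adj v u := by
    intro i hi v hv
    rw [hT₂, Finset.mem_filter] at hv
    have hi01 : i = i0 ∨ i = i1 := by
      rcases (show (i : ℕ) = 0 ∨ (i : ℕ) = 1 by omega) with h | h
      · left; exact Fin.ext h
      · right; exact Fin.ext h
    have key : f (μ i v) ≠ f v := by
      rcases hi01 with h | h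
      · rw [h]; exact hf0 v
      · rw [h]; exact hf1 v
    refine ⟨μ i v, ?_, hμadj i v⟩
    rw [hT₂, Finset.mem_filter]
    rintro ⟨_, hμt⟩
    rw [hμt, hv.2] at key
    exact key rfl
  -- main induction
  have key : ∀ j, 2 ≤ j → j ≤ k → ∃ T : Finset V,
      (∀ i : Fin k, (i : ℕ) < j → ∀ v ∈ T, ∃ u, u ∉ T ∧ (F i).Adj v u) ∧
      ((1 : ℝ) / 2 * ((2 : ℝ) / 3) ^ (j - 2) * n ≤ T.card) := by
    intro j hj2
    induction j, hj2 using Nat.le_induction with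
    | base =>
      intro _
      refine ⟨T₂, hT₂good, ?_⟩
      have : (2 : ℝ) * T₂.card = n := by exact_mod_cast hT₂card
      norm_num
      linarith
    | succ j hj ih =>
      intro hjk
      obtain ⟨T, hgood, hcard⟩ := ih (by omega)
      have hjk' : j < k := by omega
      obtain ⟨T', hsub, hc32, hdom⟩ := SDAux.shrink h3 hn2 (E ⟨j, hjk'⟩)
        (hE ⟨j, hjk'⟩) T
      refine ⟨T', ?_, ?_⟩
      · intro i hi v hv
        by_cases hij : (i : ℕ) < j
        · obtain ⟨u, hu, hadj⟩ := hgood i hij v (hsub hv)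
          exact ⟨u, fun h => hu (hsub h), hadj⟩
        · have : i = ⟨j, hjk'⟩ := Fin.ext (show (i : ℕ) = j by omega)
          rw [this]
          exact hdom v hv
      · have hcast : (2 : ℝ) * T.card ≤ 3 * T'.card := by exact_mod_cast hc32
        have hje : j + 1 - 2 = (j - 2) + 1 := by omega
        rw [hje, pow_succ]
        have hmul : (2 : ℝ) / 3 * ((1 : ℝ) / 2 * ((2 : ℝ) / 3) ^ (j - 2) * n)
            ≤ (2 : ℝ) / 3 * T.card :=
          mul_le_mul_of_nonneg_left hcard (by norm_num)
        calc (1 : ℝ) / 2 * (((2 : ℝ) / 3) ^ (j - 2) * (2 / 3)) * n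
            = (2 : ℝ) / 3 * ((1 : ℝ) / 2 * ((2 : ℝ) / 3) ^ (j - 2) * n) := by ring
          _ ≤ (2 : ℝ) / 3 * T.card := hmul
          _ ≤ T'.card := by linarith
  obtain ⟨T, hgood, hcard⟩ := key k hk le_rfl
  have hmem : Tᶜ.card ∈ {m | ∃ S : Finset V,
      (∀ i, ∀ v ∉ S, ∃ u ∈ S, (F i).Adj v u) ∧ S.card = m} := by
    refine ⟨Tᶜ, ?_, rfl⟩
    intro i v hv
    have hvT : v ∈ T := by
      by_contra h
      exact hv (Finset.mem_compl.mpr h)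
    obtain ⟨u, hu, hadj⟩ := hgood i i.isLt v hvT
    exact ⟨u, Finset.mem_compl.mpr hu, hadj⟩
  have hle : simDomNum F ≤ Tᶜ.card := Nat.sInf_le hmem
  have hcompl : Tᶜ.card = n - T.card := by
    rw [Finset.card_compl, hn]
  have hTle : T.card ≤ n := by
    rw [← hn]
    exact (Finset.card_le_univ T).trans_eq Finset.card_univ
  have hreal : (simDomNum F : ℝ) ≤ (n : ℝ) - T.card := by
    have h1 : (simDomNum F : ℝ) ≤ (Tᶜ.card : ℝ) := by exact_mod_cast hle
    rw [hcompl] at h1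
    rwa [Nat.cast_sub hTle] at h1
  have expand : (1 - (1 / 2) * ((2 : ℝ) / 3) ^ (k - 2)) * n
      = (n : ℝ) - (1 : ℝ) / 2 * ((2 : ℝ) / 3) ^ (k - 2) * n := by ring
  rw [expand]
  linarith
end

section
/- Let n be a positive multiple of 4. If F_1 and F_2 are graphs on a common vertex set of size n, each of which is the vertex-disjoint union of n/4 copies of the 4-cycle C_4, then the simultaneous domination number of F_1 and F_2 equals exactly n/2. -/
open Finset

lemma hall_step {V : Type*} [Fintype V] [DecidableEq V] {m : ℕ} (hm : 0 < m)
    (B₁ B₂ : Finset (Finset V))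
    (hd₁ : (B₁ : Set (Finset V)).PairwiseDisjoint id)
    (hd₂ : (B₂ : Set (Finset V)).PairwiseDisjoint id)
    (hcov : ∀ b ∈ B₁, b ⊆ B₂.biUnion id)
    (hc₁ : ∀ b ∈ B₁, m ≤ b.card)
    (hc₂ : ∀ c ∈ B₂, c.card ≤ m) :
    ∃ T : Finset V, (∀ v ∈ T, ∃ b ∈ B₁, v ∈ b) ∧
      (∀ b ∈ B₁, (b ∩ T).card = 1) ∧ ∀ c ∈ B₂, (c ∩ T).card ≤ 1 := by
  set t : {b // b ∈ B₁} → Finset (Finset V) :=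
    fun b => B₂.filter (fun c => (b.1 ∩ c).Nonempty) with ht
  have hall : ∀ A : Finset {b // b ∈ B₁}, A.card ≤ (A.biUnion t).card := by
    intro A
    have hdisjA : ∀ x ∈ A, ∀ y ∈ A, x ≠ y → Disjoint x.1 y.1 := by
      intro x hx y hy hxy
      exact hd₁ x.2 y.2 (fun h => hxy (Subtype.ext h))
    have hsub : A.biUnion (fun b => b.1) ⊆ (A.biUnion t).biUnion id := by
      intro v hv
      obtain ⟨b, hb, hvb⟩ := Finset.mem_biUnion.mp hv
      obtain ⟨c, hc, hvc⟩ := Finset.mem_biUnion.mp (hcov b.1 b.2 hvb)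
      refine Finset.mem_biUnion.mpr ⟨c, Finset.mem_biUnion.mpr ⟨b, hb, ?_⟩, hvc⟩
      exact Finset.mem_filter.mpr ⟨hc, ⟨v, Finset.mem_inter.mpr ⟨hvb, hvc⟩⟩⟩
    have key : m * A.card ≤ m * (A.biUnion t).card := by
      calc m * A.card = A.card • m := by rw [smul_eq_mul, Nat.mul_comm]
        _ ≤ ∑ b ∈ A, b.1.card := Finset.card_nsmul_le_sum A _ m (fun b _ => hc₁ b.1 b.2)
        _ = (A.biUnion (fun b => b.1)).card := (Finset.card_biUnion hdisjA).symm
        _ ≤ ((A.biUnion t).biUnion id).card := Finset.card_le_card hsub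
        _ ≤ ∑ c ∈ A.biUnion t, (id c).card := Finset.card_biUnion_le
        _ ≤ (A.biUnion t).card • m := Finset.sum_le_card_nsmul _ _ m
            (fun c hc => hc₂ c (Finset.mem_filter.mp (Finset.mem_biUnion.mp hc).choose_spec.2).1)
        _ = m * (A.biUnion t).card := by rw [smul_eq_mul, Nat.mul_comm]
    exact Nat.le_of_mul_le_mul_left key hm
  obtain ⟨f, hfinj, hf⟩ := (Finset.all_card_le_biUnion_card_iff_exists_injective t).mp hall
  have hne : ∀ b : {b // b ∈ B₁}, (b.1 ∩ f b).Nonempty :=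
    fun b => (Finset.mem_filter.mp (hf b)).2
  have hfB₂ : ∀ b : {b // b ∈ B₁}, f b ∈ B₂ := fun b => (Finset.mem_filter.mp (hf b)).1
  set w : {b // b ∈ B₁} → V := fun b => (hne b).choose with hw
  have hw1 : ∀ b, w b ∈ b.1 := fun b => (Finset.mem_inter.mp (hne b).choose_spec).1
  have hw2 : ∀ b, w b ∈ f b := fun b => (Finset.mem_inter.mp (hne b).choose_spec).2
  refine ⟨Finset.univ.image w, ?_, ?_, ?_⟩
  · intro v hv
    obtain ⟨b, _, rfl⟩ := Finset.mem_image.mp hv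
    exact ⟨b.1, b.2, hw1 b⟩
  · intro b hb
    rw [Finset.card_eq_one]
    refine ⟨w ⟨b, hb⟩, Finset.eq_singleton_iff_unique_mem.mpr ⟨?_, ?_⟩⟩
    · exact Finset.mem_inter.mpr ⟨hw1 ⟨b, hb⟩, Finset.mem_image.mpr ⟨⟨b, hb⟩, Finset.mem_univ _, rfl⟩⟩
    · intro x hx
      obtain ⟨hxb, hxT⟩ := Finset.mem_inter.mp hx
      obtain ⟨b', _, rfl⟩ := Finset.mem_image.mp hxT
      have : b'.1 = b := by
        refine hd₁.elim b'.2 hb (fun hdisj => ?_)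
        exact absurd (Finset.disjoint_left.mp hdisj (hw1 b') hxb) (fun h => h)
      have : b' = ⟨b, hb⟩ := Subtype.ext this
      rw [this]
  · intro c hc
    rw [Finset.card_le_one]
    intro x hx y hy
    obtain ⟨hxc, hxT⟩ := Finset.mem_inter.mp hx
    obtain ⟨hyc, hyT⟩ := Finset.mem_inter.mp hy
    obtain ⟨b₁, _, rfl⟩ := Finset.mem_image.mp hxT
    obtain ⟨b₂, _, rfl⟩ := Finset.mem_image.mp hyT
    have h1 : c = f b₁ := hd₂.elim hc (hfB₂ b₁)
      (fun hdisj => absurd (Finset.disjoint_left.mp hdisj hxc (hw2 b₁)) (fun h => h))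
    have h2 : c = f b₂ := hd₂.elim hc (hfB₂ b₂)
      (fun hdisj => absurd (Finset.disjoint_left.mp hdisj hyc (hw2 b₂)) (fun h => h))
    have : b₁ = b₂ := hfinj (h1.symm.trans h2)
    rw [this]

lemma c4_opp : ∀ i : Fin 4, ¬ (SimpleGraph.cycleGraph 4).Adj (i+2) i ∧ ¬ (SimpleGraph.cycleGraph 4).Adj i (i+2) ∧ i ≠ i + 2 := by decide

lemma c4_two : ∀ i j k : Fin 4, i ≠ j → i ≠ k → j ≠ k →
    (SimpleGraph.cycleGraph 4).Adj i j ∨ (SimpleGraph.cycleGraph 4).Adj i k := by decide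

lemma adj_transfer {V : Type*} [Fintype V] [DecidableEq V] {G : SimpleGraph V}
    {b : Finset V} (e : G.induce (↑b : Set V) ≃g SimpleGraph.cycleGraph 4)
    {v u : V} (hv : v ∈ b) (hu : u ∈ b) :
    G.Adj v u ↔ (SimpleGraph.cycleGraph 4).Adj (e ⟨v, by simpa using hv⟩) (e ⟨u, by simpa using hu⟩) := by
  rw [e.map_adj_iff]
  rfl

/-- In a disjoint union of C4's, any dominating set meets each block in ≥ 2 vertices. -/
lemma two_le_inter {V : Type*} [Fintype V] [DecidableEq V] {G : SimpleGraph V}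
    {P : Finpartition (Finset.univ : Finset V)}
    (hedge : ∀ u v : V, G.Adj u v → ∃ b ∈ P.parts, u ∈ b ∧ v ∈ b)
    {S : Finset V} (hS : ∀ v ∉ S, ∃ u ∈ S, G.Adj v u)
    {b : Finset V} (hb : b ∈ P.parts)
    (hiso : Nonempty (G.induce (↑b : Set V) ≃g SimpleGraph.cycleGraph 4)) :
    2 ≤ (b ∩ S).card := by
  obtain ⟨e⟩ := hiso
  by_contra hlt
  push_neg at hlt
  interval_cases h : (b ∩ S).card
  · -- empty intersection
    rw [Finset.card_eq_zero] at h
    have hbcard : b.card = 4 := by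
      have := Fintype.card_congr e.toEquiv; simpa using this
    obtain ⟨v, hv⟩ : b.Nonempty := Finset.card_pos.mp (by omega)
    have hvS : v ∉ S := fun hvS =>
      Finset.notMem_empty v (h ▸ Finset.mem_inter.mpr ⟨hv, hvS⟩)
    obtain ⟨u, huS, hadj⟩ := hS v hvS
    obtain ⟨b', hb', hvb', hub'⟩ := hedge v u hadj
    have : b' = b := P.eq_of_mem_parts hb' hb hvb' hv
    subst this
    exact Finset.notMem_empty u (h ▸ Finset.mem_inter.mpr ⟨hub', huS⟩)
  · -- singleton intersection
    rw [Finset.card_eq_one] at h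
    obtain ⟨s, hs⟩ := h
    have hsb : s ∈ b ∧ s ∈ S := Finset.mem_inter.mp (hs ▸ Finset.mem_singleton_self s)
    set i : Fin 4 := e ⟨s, by simpa using hsb.1⟩ with hi
    set vv : ↥(↑b : Set V) := e.symm (i + 2) with hvv
    have hvb : (vv : V) ∈ b := by simpa using vv.2
    have hvs : (vv : V) ≠ s := by
      intro hcontra
      apply (c4_opp i).2.2
      have hh : vv = (⟨s, by simpa using hsb.1⟩ : ↥(↑b : Set V)) := Subtype.ext hcontra
      calc i = e ⟨s, by simpa using hsb.1⟩ := hi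
        _ = e vv := by rw [hh]
        _ = i + 2 := by rw [hvv]; exact e.toEquiv.apply_symm_apply _
    have hvS : (vv : V) ∉ S := by
      intro hc
      have : (vv : V) ∈ b ∩ S := Finset.mem_inter.mpr ⟨hvb, hc⟩
      rw [hs, Finset.mem_singleton] at this
      exact hvs this
    obtain ⟨u, huS, hadj⟩ := hS vv hvS
    obtain ⟨b', hb', hvb', hub'⟩ := hedge vv u hadj
    have hbb : b' = b := P.eq_of_mem_parts hb' hb hvb' hvb
    rw [hbb] at hub'
    have : u = s := by
      have : u ∈ b ∩ S := Finset.mem_inter.mpr ⟨hub', huS⟩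
      rwa [hs, Finset.mem_singleton] at this
    subst this
    rw [adj_transfer e hvb hsb.1] at hadj
    have he : e ⟨(vv : V), by simpa using hvb⟩ = i + 2 := by
      have : (⟨(vv : V), by simpa using hvb⟩ : ↥(↑b : Set V)) = vv := rfl
      rw [this, hvv]; simp
    rw [he] at hadj
    exact (c4_opp i).1 hadj

/-- If a set meets a C4 block in ≥ 2 vertices, every vertex of the block outside
the set has a neighbor in the set. -/
lemma dominated_of_two {V : Type*} [Fintype V] [DecidableEq V] {G : SimpleGraph V}
    {S : Finset V} {b : Finset V}
    (hiso : Nonempty (G.induce (↑b : Set V) ≃g SimpleGraph.cycleGraph 4))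
    (hcard : 2 ≤ (b ∩ S).card) {v : V} (hv : v ∈ b) (hvS : v ∉ S) :
    ∃ u ∈ S, G.Adj v u := by
  obtain ⟨e⟩ := hiso
  obtain ⟨s₁, hs₁, s₂, hs₂, hne⟩ := Finset.one_lt_card.mp hcard
  obtain ⟨hs₁b, hs₁S⟩ := Finset.mem_inter.mp hs₁
  obtain ⟨hs₂b, hs₂S⟩ := Finset.mem_inter.mp hs₂
  have h1 : v ≠ s₁ := fun h => hvS (h ▸ hs₁S)
  have h2 : v ≠ s₂ := fun h => hvS (h ▸ hs₂S)
  have einj : ∀ {x y : V} (hx : x ∈ b) (hy : y ∈ b), x ≠ y →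
      e ⟨x, by simpa using hx⟩ ≠ e ⟨y, by simpa using hy⟩ := by
    intro x y hx hy hxy hc
    exact hxy (congrArg Subtype.val (e.toEquiv.injective hc))
  have := c4_two (e ⟨v, by simpa using hv⟩) (e ⟨s₁, by simpa using hs₁b⟩)
    (e ⟨s₂, by simpa using hs₂b⟩) (einj hv hs₁b h1) (einj hv hs₂b h2)
    (einj hs₁b hs₂b hne)
  rcases this with h | h
  · exact ⟨s₁, hs₁S, (adj_transfer e hv hs₁b).mpr h⟩
  · exact ⟨s₂, hs₂S, (adj_transfer e hv hs₂b).mpr h⟩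

lemma card_eq_sum_inter {V : Type*} [Fintype V] [DecidableEq V]
    (P : Finpartition (Finset.univ : Finset V)) (T : Finset V) :
    T.card = ∑ b ∈ P.parts, (b ∩ T).card := by
  have hT : T = P.parts.biUnion (fun b => b ∩ T) := by
    ext v
    simp only [Finset.mem_biUnion, Finset.mem_inter]
    constructor
    · intro hv
      obtain ⟨b, hb, hvb⟩ := P.exists_mem (Finset.mem_univ v)
      exact ⟨b, hb, hvb, hv⟩
    · rintro ⟨b, _, _, hv⟩; exact hv
  nth_rewrite 1 [hT]
  apply Finset.card_biUnion
  intro x hx y hy hxy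
  exact (P.disjoint hx hy hxy).mono Finset.inter_subset_left Finset.inter_subset_left

lemma all_eq_one {α : Type*} {s : Finset α} {f : α → ℕ}
    (h1 : ∀ a ∈ s, f a ≤ 1) (h2 : s.card ≤ ∑ a ∈ s, f a) : ∀ a ∈ s, f a = 1 := by
  by_contra hc
  push_neg at hc
  obtain ⟨a, ha, hfa⟩ := hc
  have : ∑ a ∈ s, f a < ∑ _a ∈ s, 1 :=
    Finset.sum_lt_sum h1 ⟨a, ha, lt_of_le_of_ne (h1 a ha) hfa⟩
  simp only [Finset.sum_const, smul_eq_mul, mul_one] at this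
  omega


/-- `G` is the vertex-disjoint union of copies of the graph `H`: the vertex set
partitions into blocks, the induced subgraph on each block is isomorphic to `H`,
and there are no edges between blocks. -/
def IsDisjointUnionCopies {V W : Type*} [Fintype V] [DecidableEq V]
    (G : SimpleGraph V) (H : SimpleGraph W) : Prop :=
  ∃ P : Finpartition (Finset.univ : Finset V),
    (∀ b ∈ P.parts, Nonempty (G.induce (↑b : Set V) ≃g H)) ∧
    ∀ u v : V, G.Adj u v → ∃ b ∈ P.parts, u ∈ b ∧ v ∈ b

theorem stmt17 {V : Type*} [Fintype V] [DecidableEq V] {n : ℕ} (hn0 : 0 < n)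
    (hdvd : 4 ∣ n) (hn : Fintype.card V = n) (F₁ F₂ : SimpleGraph V)
    (h1 : IsDisjointUnionCopies F₁ (SimpleGraph.cycleGraph 4))
    (h2 : IsDisjointUnionCopies F₂ (SimpleGraph.cycleGraph 4)) :
    simDomNum ![F₁, F₂] = n / 2 := by
  obtain ⟨q, rfl⟩ := hdvd
  obtain ⟨P₁, hiso₁, hedge₁⟩ := h1
  obtain ⟨P₂, hiso₂, hedge₂⟩ := h2
  have hb₁ : ∀ b ∈ P₁.parts, b.card = 4 := by
    intro b hb
    obtain ⟨e⟩ := hiso₁ b hb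
    have := Fintype.card_congr e.toEquiv; simpa using this
  have hb₂ : ∀ b ∈ P₂.parts, b.card = 4 := by
    intro b hb
    obtain ⟨e⟩ := hiso₂ b hb
    have := Fintype.card_congr e.toEquiv; simpa using this
  have hcardsum : ∀ (P : Finpartition (Finset.univ : Finset V)),
      (∀ b ∈ P.parts, b.card = 4) → P.parts.card = q := by
    intro P hP
    have h := P.sum_card_parts
    rw [Finset.sum_congr rfl hP, Finset.sum_const, smul_eq_mul,
      Finset.card_univ, hn] at h
    omega
  have hq₁ : P₁.parts.card = q := hcardsum P₁ hb₁
  have hq₂ : P₂.parts.card = q := hcardsum P₂ hb₂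
  -- Round one of Hall's theorem
  have hcov₁ : ∀ b ∈ P₁.parts, b ⊆ P₂.parts.biUnion id := by
    intro b _ v _
    obtain ⟨c, hc, hvc⟩ := P₂.exists_mem (Finset.mem_univ v)
    exact Finset.mem_biUnion.mpr ⟨c, hc, hvc⟩
  obtain ⟨T₁, hT₁mem, hT₁L, hT₁R⟩ := hall_step (m := 4) (by norm_num)
    P₁.parts P₂.parts P₁.disjoint P₂.disjoint hcov₁
    (fun b hb => (hb₁ b hb).ge) (fun c hc => (hb₂ c hc).le)
  have hT₁card : T₁.card = q := by
    rw [card_eq_sum_inter P₁ T₁, Finset.sum_congr rfl hT₁L, Finset.sum_const,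
      smul_eq_mul, mul_one, hq₁]
  have hT₁R' : ∀ c ∈ P₂.parts, (c ∩ T₁).card = 1 :=
    all_eq_one hT₁R (by rw [← card_eq_sum_inter P₂ T₁, hT₁card, hq₂])
  -- Round two of Hall's theorem, on the blocks minus the chosen vertices
  have hd₁' : ((P₁.parts.image (· \ T₁) : Finset (Finset V)) :
      Set (Finset V)).PairwiseDisjoint id := by
    intro x hx y hy hxy
    obtain ⟨b, hb, rfl⟩ := Finset.mem_image.mp hx
    obtain ⟨b', hb', rfl⟩ := Finset.mem_image.mp hy
    have : b ≠ b' := fun h => hxy (by rw [h])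
    exact (P₁.disjoint hb hb' this).mono Finset.sdiff_subset Finset.sdiff_subset
  have hd₂' : ((P₂.parts.image (· \ T₁) : Finset (Finset V)) :
      Set (Finset V)).PairwiseDisjoint id := by
    intro x hx y hy hxy
    obtain ⟨b, hb, rfl⟩ := Finset.mem_image.mp hx
    obtain ⟨b', hb', rfl⟩ := Finset.mem_image.mp hy
    have : b ≠ b' := fun h => hxy (by rw [h])
    exact (P₂.disjoint hb hb' this).mono Finset.sdiff_subset Finset.sdiff_subset
  have hcov₂ : ∀ x ∈ P₁.parts.image (· \ T₁), x ⊆ (P₂.parts.image (· \ T₁)).biUnion id := by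
    intro x hx v hv
    obtain ⟨b, hb, rfl⟩ := Finset.mem_image.mp hx
    obtain ⟨hvb, hvT₁⟩ := Finset.mem_sdiff.mp hv
    obtain ⟨c, hc, hvc⟩ := P₂.exists_mem (Finset.mem_univ v)
    exact Finset.mem_biUnion.mpr ⟨c \ T₁, Finset.mem_image_of_mem _ hc,
      Finset.mem_sdiff.mpr ⟨hvc, hvT₁⟩⟩
  have hc₁' : ∀ x ∈ P₁.parts.image (· \ T₁), (3 : ℕ) ≤ x.card := by
    intro x hx
    obtain ⟨b, hb, rfl⟩ := Finset.mem_image.mp hx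
    have h4 := hb₁ b hb
    have h1 := hT₁L b hb
    have := Finset.card_inter_add_card_sdiff b T₁
    omega
  have hc₂' : ∀ x ∈ P₂.parts.image (· \ T₁), x.card ≤ 3 := by
    intro x hx
    obtain ⟨c, hc, rfl⟩ := Finset.mem_image.mp hx
    have h4 := hb₂ c hc
    have h1 := hT₁R' c hc
    have := Finset.card_inter_add_card_sdiff c T₁
    omega
  obtain ⟨T₂, hT₂mem, hT₂L, hT₂R⟩ := hall_step (m := 3) (by norm_num)
    (P₁.parts.image (· \ T₁)) (P₂.parts.image (· \ T₁)) hd₁' hd₂' hcov₂ hc₁' hc₂'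
  have hdisj : Disjoint T₁ T₂ := by
    rw [Finset.disjoint_right]
    intro v hv₂ hv₁
    obtain ⟨x, hx, hvx⟩ := hT₂mem v hv₂
    obtain ⟨b, _, rfl⟩ := Finset.mem_image.mp hx
    exact (Finset.mem_sdiff.mp hvx).2 hv₁
  have hswap : ∀ b : Finset V, b ∩ T₂ = (b \ T₁) ∩ T₂ := by
    intro b
    ext v
    simp only [Finset.mem_inter, Finset.mem_sdiff]
    constructor
    · rintro ⟨hvb, hvT₂⟩
      exact ⟨⟨hvb, Finset.disjoint_right.mp hdisj hvT₂⟩, hvT₂⟩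
    · rintro ⟨⟨hvb, _⟩, hvT₂⟩; exact ⟨hvb, hvT₂⟩
  have hT₂L' : ∀ b ∈ P₁.parts, (b ∩ T₂).card = 1 := by
    intro b hb
    rw [hswap]
    exact hT₂L _ (Finset.mem_image_of_mem _ hb)
  have hT₂card : T₂.card = q := by
    rw [card_eq_sum_inter P₁ T₂, Finset.sum_congr rfl hT₂L', Finset.sum_const,
      smul_eq_mul, mul_one, hq₁]
  have hT₂R' : ∀ c ∈ P₂.parts, (c ∩ T₂).card = 1 := by
    refine all_eq_one (fun c hc => ?_)
      (by rw [← card_eq_sum_inter P₂ T₂, hT₂card, hq₂])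
    rw [hswap]
    exact hT₂R _ (Finset.mem_image_of_mem _ hc)
  -- the simultaneous dominating set
  set S : Finset V := T₁ ∪ T₂ with hS
  have hScard : S.card = 2 * q := by
    rw [hS, Finset.card_union_of_disjoint hdisj, hT₁card, hT₂card]
    omega
  have hSinter : ∀ (P : Finpartition (Finset.univ : Finset V)),
      (∀ b ∈ P.parts, (b ∩ T₁).card = 1) → (∀ b ∈ P.parts, (b ∩ T₂).card = 1) →
      ∀ b ∈ P.parts, 2 ≤ (b ∩ S).card := by
    intro P h₁ h₂ b hb
    rw [hS, Finset.inter_union_distrib_left,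
      Finset.card_union_of_disjoint
        (hdisj.mono Finset.inter_subset_right Finset.inter_subset_right),
      h₁ b hb, h₂ b hb]
  have hdom₁ : ∀ v ∉ S, ∃ u ∈ S, F₁.Adj v u := by
    intro v hv
    obtain ⟨b, hb, hvb⟩ := P₁.exists_mem (Finset.mem_univ v)
    obtain ⟨u, hu, hadj⟩ := dominated_of_two (hiso₁ b hb)
      (hSinter P₁ hT₁L hT₂L' b hb) hvb hv
    exact ⟨u, hu, hadj⟩
  have hdom₂ : ∀ v ∉ S, ∃ u ∈ S, F₂.Adj v u := by
    intro v hv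
    obtain ⟨b, hb, hvb⟩ := P₂.exists_mem (Finset.mem_univ v)
    obtain ⟨u, hu, hadj⟩ := dominated_of_two (hiso₂ b hb)
      (hSinter P₂ hT₁R' hT₂R' b hb) hvb hv
    exact ⟨u, hu, hadj⟩
  have hmem : 2 * q ∈ {m | ∃ S : Finset V,
      (∀ i, ∀ v ∉ S, ∃ u ∈ S, ((![F₁, F₂]) i).Adj v u) ∧ S.card = m} := by
    refine ⟨S, ?_, hScard⟩
    intro i
    fin_cases i
    · simpa using hdom₁
    · simpa using hdom₂
  have hhalf : 4 * q / 2 = 2 * q := by omega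
  rw [hhalf]
  refine le_antisymm (Nat.sInf_le hmem) (le_csInf ⟨2 * q, hmem⟩ ?_)
  rintro m ⟨S', hS', rfl⟩
  have hS'₁ : ∀ v ∉ S', ∃ u ∈ S', F₁.Adj v u := by
    have := hS' 0
    simpa using this
  have hlow : ∀ b ∈ P₁.parts, 2 ≤ (b ∩ S').card :=
    fun b hb => two_le_inter hedge₁ hS'₁ hb (hiso₁ b hb)
  calc 2 * q = ∑ _b ∈ P₁.parts, 2 := by
        rw [Finset.sum_const, smul_eq_mul, hq₁]; omega
    _ ≤ ∑ b ∈ P₁.parts, (b ∩ S').card := Finset.sum_le_sum hlow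
    _ = S'.card := (card_eq_sum_inter P₁ S').symm
end

section
/- Let n be a positive multiple of 4. If F_1, F_2, F_3 are graphs on a common vertex set of size n, each of which is the vertex-disjoint union of n/4 copies of the 4-cycle C_4, then the simultaneous domination number of F_1, F_2, F_3 is at most 3n/4. -/
/-- From a disjoint union of 4-cycles, extract a partition whose blocks have
cardinality 4 and in which every vertex has two distinct neighbors inside its block. -/
lemma extract_c4 {V : Type*} [Fintype V] [DecidableEq V] {G : SimpleGraph V}
    (h : IsDisjointUnionCopies G (SimpleGraph.cycleGraph 4)) :
    ∃ P : Finpartition (Finset.univ : Finset V),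
      (∀ b ∈ P.parts, b.card = 4) ∧
      (∀ b ∈ P.parts, ∀ v ∈ b, ∃ u₁ u₂, u₁ ∈ b ∧ u₂ ∈ b ∧ u₁ ≠ u₂ ∧
        G.Adj v u₁ ∧ G.Adj v u₂) := by
  obtain ⟨P, hIso, -⟩ := h
  refine ⟨P, ?_, ?_⟩
  · intro b hb
    obtain ⟨e⟩ := hIso b hb
    have : Fintype.card (↑b : Set V) = Fintype.card (Fin 4) := Fintype.card_congr e.toEquiv
    simpa using this
  · intro b hb v hv
    obtain ⟨e⟩ := hIso b hb
    have hv' : v ∈ (↑b : Set V) := by simpa using hv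
    set x : Fin 4 := e ⟨v, hv'⟩ with hx
    have hadj : ∀ y : Fin 4, (SimpleGraph.cycleGraph 4).Adj x y →
        G.Adj v ((e.symm y : (↑b : Set V)) : V) := by
      intro y hy
      have h2 : (SimpleGraph.cycleGraph 4).Adj (e ⟨v, hv'⟩) (e (e.symm y)) := by
        rwa [e.apply_symm_apply]
      have h3 : (G.induce (↑b : Set V)).Adj ⟨v, hv'⟩ (e.symm y) := e.map_rel_iff.mp h2
      exact h3
    have hadj1 : (SimpleGraph.cycleGraph 4).Adj x (x + 1) := by
      rw [SimpleGraph.cycleGraph_adj]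
      right
      simp
    have hadj2 : (SimpleGraph.cycleGraph 4).Adj x (x - 1) := by
      rw [SimpleGraph.cycleGraph_adj]
      left
      simp
    refine ⟨((e.symm (x + 1) : (↑b : Set V)) : V), ((e.symm (x - 1) : (↑b : Set V)) : V),
      ?_, ?_, ?_, hadj _ hadj1, hadj _ hadj2⟩
    · have := (e.symm (x + 1)).property; simp_all
    · have := (e.symm (x - 1)).property; simp_all
    · intro hEq
      have h4 : e.symm (x + 1) = e.symm (x - 1) := Subtype.ext hEq
      have h5 : x + 1 = x - 1 := e.symm.injective h4
      have h6 : x + 1 = x + (-1) := by rwa [sub_eq_add_neg] at h5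
      have h7 : (1 : Fin 4) = -1 := add_left_cancel h6
      exact absurd h7 (by decide)

theorem stmt18 {V : Type*} [Fintype V] [DecidableEq V] {n : ℕ} (hn0 : 0 < n)
    (hdvd : 4 ∣ n) (hn : Fintype.card V = n) (F₁ F₂ F₃ : SimpleGraph V)
    (h1 : IsDisjointUnionCopies F₁ (SimpleGraph.cycleGraph 4))
    (h2 : IsDisjointUnionCopies F₂ (SimpleGraph.cycleGraph 4))
    (h3 : IsDisjointUnionCopies F₃ (SimpleGraph.cycleGraph 4)) :
    simDomNum ![F₁, F₂, F₃] ≤ 3 * n / 4 := by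
  classical
  obtain ⟨P₁, hc₁, hnb₁⟩ := extract_c4 h1
  obtain ⟨P₂, hc₂, hnb₂⟩ := extract_c4 h2
  obtain ⟨P₃, hc₃, hnb₃⟩ := extract_c4 h3
  set P : Fin 3 → Finpartition (Finset.univ : Finset V) := ![P₁, P₂, P₃] with hP
  have hcard : ∀ i : Fin 3, ∀ b ∈ (P i).parts, b.card = 4 := by
    intro i
    fin_cases i <;> simpa [hP] using (by assumption : _)
  have hnb : ∀ i : Fin 3, ∀ b ∈ (P i).parts, ∀ v ∈ b, ∃ u₁ u₂, u₁ ∈ b ∧ u₂ ∈ b ∧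
      u₁ ≠ u₂ ∧ (![F₁, F₂, F₃] i).Adj v u₁ ∧ (![F₁, F₂, F₃] i).Adj v u₂ := by
    intro i
    fin_cases i
    · simpa [hP] using hnb₁
    · simpa [hP] using hnb₂
    · simpa [hP] using hnb₃
  -- the family of "good" sets
  set Good : Finset V → Prop := fun T => ∀ i : Fin 3, ∀ b ∈ (P i).parts, (T ∩ b).card ≤ 2
    with hGood
  have hGoodEmpty : Good ∅ := by intro i b hb; simp
  -- choose a maximum-cardinality good set
  obtain ⟨T, hTmem, hTmax⟩ := Finset.exists_max_image
    ((Finset.univ : Finset (Finset V)).filter Good) Finset.card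
    ⟨∅, Finset.mem_filter.mpr ⟨Finset.mem_univ _, hGoodEmpty⟩⟩
  have hTGood : Good T := (Finset.mem_filter.mp hTmem).2
  -- maximality: every vertex outside T is blocked by a full block
  have hblocked : ∀ v ∉ T, ∃ i : Fin 3, ∃ b ∈ (P i).parts, v ∈ b ∧ 2 ≤ (T ∩ b).card := by
    intro v hv
    by_contra hcon
    push_neg at hcon
    have hGood' : Good (insert v T) := by
      intro i b hb
      by_cases hvb : v ∈ b
      · have h2 : (T ∩ b).card ≤ 1 := by
          have := hcon i b hb hvb
          omega
        have hsub : insert v T ∩ b ⊆ insert v (T ∩ b) := by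
          intro x hx
          rcases Finset.mem_inter.mp hx with ⟨hx1, hx2⟩
          rcases Finset.mem_insert.mp hx1 with h | h
          · exact Finset.mem_insert.mpr (Or.inl h)
          · exact Finset.mem_insert.mpr (Or.inr (Finset.mem_inter.mpr ⟨h, hx2⟩))
        calc (insert v T ∩ b).card ≤ (insert v (T ∩ b)).card := Finset.card_le_card hsub
          _ ≤ (T ∩ b).card + 1 := Finset.card_insert_le _ _
          _ ≤ 2 := by omega
      · have : insert v T ∩ b = T ∩ b := by
          ext x
          simp only [Finset.mem_inter, Finset.mem_insert]
          constructor
          · rintro ⟨h | h, hx2⟩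
            · exact absurd (h ▸ hx2) hvb
            · exact ⟨h, hx2⟩
          · rintro ⟨h, hx2⟩; exact ⟨Or.inr h, hx2⟩
        rw [this]
        exact hTGood i b hb
    have hmem' : insert v T ∈ ((Finset.univ : Finset (Finset V)).filter Good) :=
      Finset.mem_filter.mpr ⟨Finset.mem_univ _, hGood'⟩
    have := hTmax _ hmem'
    rw [Finset.card_insert_of_notMem hv] at this
    omega
  -- the collection of full blocks
  set Full : Finset ((_ : Fin 3) × Finset V) :=
    ((Finset.univ : Finset (Fin 3)).sigma fun i => (P i).parts).filter
      fun p => 2 ≤ (T ∩ p.2).card with hFull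
  -- counting: complement of T is covered by the non-T parts of full blocks
  have hcover : Finset.univ \ T ⊆ Full.biUnion fun p => p.2 \ T := by
    intro v hv
    have hvT : v ∉ T := (Finset.mem_sdiff.mp hv).2
    obtain ⟨i, b, hb, hvb, h2⟩ := hblocked v hvT
    refine Finset.mem_biUnion.mpr ⟨⟨i, b⟩, ?_, ?_⟩
    · rw [hFull, Finset.mem_filter, Finset.mem_sigma]
      exact ⟨⟨Finset.mem_univ _, hb⟩, h2⟩
    · exact Finset.mem_sdiff.mpr ⟨hvb, hvT⟩
  have hstep1 : (Finset.univ \ T).card ≤ ∑ p ∈ Full, (p.2 \ T).card :=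
    le_trans (Finset.card_le_card hcover) Finset.card_biUnion_le
  -- in a full block, the non-T part has the same size as the T part (both 2)
  have hterm : ∀ p ∈ Full, (p.2 \ T).card = (T ∩ p.2).card := by
    intro p hp
    rw [hFull, Finset.mem_filter, Finset.mem_sigma] at hp
    obtain ⟨⟨-, hb⟩, h2⟩ := hp
    have hle : (T ∩ p.2).card ≤ 2 := hTGood p.1 p.2 hb
    have heq2 : (T ∩ p.2).card = 2 := le_antisymm hle h2
    have hb4 : p.2.card = 4 := hcard p.1 p.2 hb
    have h5 : (p.2 \ T).card + (p.2 ∩ T).card = p.2.card :=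
      Finset.card_sdiff_add_card_inter p.2 T
    rw [Finset.inter_comm] at h5
    omega
  have hstep2 : ∑ p ∈ Full, (p.2 \ T).card = ∑ p ∈ Full, (T ∩ p.2).card :=
    Finset.sum_congr rfl hterm
  have hstep3 : ∑ p ∈ Full, (T ∩ p.2).card ≤
      ∑ p ∈ ((Finset.univ : Finset (Fin 3)).sigma fun i => (P i).parts), (T ∩ p.2).card := by
    apply Finset.sum_le_sum_of_subset
    rw [hFull]
    exact Finset.filter_subset _ _
  have hpartsum : ∀ i : Fin 3, ∑ b ∈ (P i).parts, (T ∩ b).card = T.card := by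
    intro i
    have hdisj : ∀ x ∈ (P i).parts, ∀ y ∈ (P i).parts, x ≠ y →
        Disjoint (T ∩ x) (T ∩ y) := by
      intro x hx y hy hxy
      exact Finset.disjoint_of_subset_left (Finset.inter_subset_right)
        (Finset.disjoint_of_subset_right (Finset.inter_subset_right)
          ((P i).disjoint hx hy hxy))
    have hbU : ((P i).parts.biUnion fun b => T ∩ b) = T := by
      ext x
      simp only [Finset.mem_biUnion, Finset.mem_inter]
      constructor
      · rintro ⟨b, -, hxT, -⟩; exact hxT
      · intro hxT
        obtain ⟨b, hb, hxb⟩ := (P i).exists_mem (Finset.mem_univ x)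
        exact ⟨b, hb, hxT, hxb⟩
    rw [← Finset.card_biUnion hdisj, hbU]
  have hstep4 : ∑ p ∈ ((Finset.univ : Finset (Fin 3)).sigma fun i => (P i).parts),
      (T ∩ p.2).card = 3 * T.card := by
    rw [Finset.sum_sigma]
    simp only [hpartsum]
    rw [Fin.sum_univ_three]
    ring
  -- conclude the size bound on T
  have hTle : T.card ≤ Fintype.card V := by
    simpa using Finset.card_le_card (Finset.subset_univ T)
  have hsdiffcard : (Finset.univ \ T).card = n - T.card := by
    rw [Finset.card_sdiff_of_subset (Finset.subset_univ T), Finset.card_univ, hn]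
  have hkey : n - T.card ≤ 3 * T.card := by
    rw [← hsdiffcard]
    calc (Finset.univ \ T).card ≤ ∑ p ∈ Full, (p.2 \ T).card := hstep1
      _ = ∑ p ∈ Full, (T ∩ p.2).card := hstep2
      _ ≤ _ := hstep3
      _ = 3 * T.card := hstep4
  -- the dominating set
  set S : Finset V := Finset.univ \ T with hS
  have hdom : ∀ i : Fin 3, ∀ v ∉ S, ∃ u ∈ S, (![F₁, F₂, F₃] i).Adj v u := by
    intro i v hv
    have hvT : v ∈ T := by
      by_contra hvT
      exact hv (Finset.mem_sdiff.mpr ⟨Finset.mem_univ v, hvT⟩)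
    obtain ⟨b, hb, hvb⟩ := (P i).exists_mem (Finset.mem_univ v)
    obtain ⟨u₁, u₂, hu₁b, hu₂b, hne, hadj₁, hadj₂⟩ := hnb i b hb v hvb
    by_cases hu₁T : u₁ ∈ T
    · by_cases hu₂T : u₂ ∈ T
      · exfalso
        have hsub : ({v, u₁, u₂} : Finset V) ⊆ T ∩ b := by
          intro x hx
          simp only [Finset.mem_insert, Finset.mem_singleton] at hx
          rcases hx with rfl | rfl | rfl
          · exact Finset.mem_inter.mpr ⟨hvT, hvb⟩
          · exact Finset.mem_inter.mpr ⟨hu₁T, hu₁b⟩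
          · exact Finset.mem_inter.mpr ⟨hu₂T, hu₂b⟩
        have hvne₁ : v ≠ u₁ := hadj₁.ne
        have hvne₂ : v ≠ u₂ := hadj₂.ne
        have hc3 : ({v, u₁, u₂} : Finset V).card = 3 := by
          rw [Finset.card_insert_of_notMem (by simp [hvne₁, hvne₂]),
            Finset.card_insert_of_notMem (by simp [hne]), Finset.card_singleton]
        have := Finset.card_le_card hsub
        rw [hc3] at this
        have := hTGood i b hb
        omega
      · exact ⟨u₂, Finset.mem_sdiff.mpr ⟨Finset.mem_univ _, hu₂T⟩, hadj₂⟩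
    · exact ⟨u₁, Finset.mem_sdiff.mpr ⟨Finset.mem_univ _, hu₁T⟩, hadj₁⟩
  have hmem : S.card ∈ {m | ∃ S : Finset V,
      (∀ i, ∀ v ∉ S, ∃ u ∈ S, ((![F₁, F₂, F₃] : Fin 3 → SimpleGraph V) i).Adj v u) ∧
      S.card = m} := ⟨S, hdom, rfl⟩
  have hinf : simDomNum ![F₁, F₂, F₃] ≤ S.card := Nat.sInf_le hmem
  have hScard : S.card = n - T.card := hsdiffcard
  obtain ⟨m, rfl⟩ := hdvd
  have : S.card ≤ 3 * (4 * m) / 4 := by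
    rw [hScard]
    omega
  exact le_trans hinf this
end
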